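/- arXiv:2202.07299 — 2 statements merged into one kernel-verified Lean document; each statement's English description precedes it below -/
import Mathlib

section
/- If S ⊆ {0,1}^n is cube-ideal, then every restriction of S obtained by fixing some coordinates to 0 or 1 and dropping those coordinates is also cube-ideal. -/
/-- The 0/1 point of `ℝ^ι` corresponding to `x ∈ {0,1}^ι`. -/
def emb {ι : Type*} (x : ι → Bool) : ι → ℝ := fun i => if x i then 1 else 0

/-- `S ⊆ {0,1}^ι` is cube-ideal if its convex hull can be described by
`0 ≤ x ≤ 1` together with inequalities `∑_{i∈I} x_i + ∑_{j∈J} (1-x_j) ≥ 1`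
for disjoint `I, J`. -/
def CubeIdeal {ι : Type*} [Fintype ι] (S : Set (ι → Bool)) : Prop :=
  ∃ P : Set (Finset ι × Finset ι),
    (∀ q ∈ P, Disjoint q.1 q.2) ∧
    convexHull ℝ (emb '' S) =
      { x : ι → ℝ | (∀ i, 0 ≤ x i ∧ x i ≤ 1) ∧
        ∀ q ∈ P, 1 ≤ ∑ i ∈ q.1, x i + ∑ j ∈ q.2, (1 - x j) }

/-!
Fixing `x_i = a_i` for `i ∉ K` cuts out a face of the cube, and a face of `conv S` is the convex
hull of the points of `S` on it; so `y` lies in the convex hull of the restriction iff its extension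
by `a` lies in `conv S`. Substituting `x_i = a_i` into an inequality of the system for `S` either
makes it redundant on the cube (when `a` satisfies one of its literals outside `K`) or leaves an
inequality of the same shape in the coordinates of `K`.
-/

theorem mem_convexHull_setOf_eq_of_le {E κ : Type*} [AddCommGroup E] [Module ℝ E]
    {s : Set E} {x : E} (l : κ → E →ₗ[ℝ] ℝ) (c : κ → ℝ) (hs : ∀ z ∈ s, ∀ k, l k z ≤ c k)
    (hx : x ∈ convexHull ℝ s) (hxc : ∀ k, l k x = c k) :
    x ∈ convexHull ℝ {z ∈ s | ∀ k, l k z = c k} := by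
  classical
  rw [convexHull_eq] at hx
  obtain ⟨ι, t, w, z, hw0, hw1, hz, rfl⟩ := hx
  have hz_face : ∀ i ∈ t, w i ≠ 0 → ∀ k, l k (z i) = c k := by
    intro i hi hwi k
    have hsum : ∑ j ∈ t, w j * (c k - l k (z j)) = 0 := by
      have hlx := hxc k
      rw [Finset.centerMass_eq_of_sum_1 _ _ hw1, map_sum] at hlx
      simp only [map_smul, smul_eq_mul] at hlx
      simp only [mul_sub, Finset.sum_sub_distrib, ← Finset.sum_mul, hw1, one_mul, hlx, sub_self]
    have hnonneg : ∀ j ∈ t, 0 ≤ w j * (c k - l k (z j)) :=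
      fun j hj => mul_nonneg (hw0 j hj) (sub_nonneg.2 (hs _ (hz j hj) k))
    have hterm := (Finset.sum_eq_zero_iff_of_nonneg hnonneg).1 hsum i hi
    linarith [(mul_eq_zero.1 hterm).resolve_left hwi]
  rw [← Finset.centerMass_filter_ne_zero]
  refine Finset.centerMass_mem_convexHull _ (fun i hi => hw0 i (Finset.mem_filter.1 hi).1) ?_ ?_
  · rw [Finset.sum_filter_ne_zero, hw1]; exact one_pos
  · intro i hi
    obtain ⟨hit, hwi⟩ := Finset.mem_filter.1 hi
    exact ⟨hz i hit, hz_face i hit hwi⟩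

lemma emb_mem_Icc {ι : Type*} (x : ι → Bool) (i : ι) : 0 ≤ emb x i ∧ emb x i ≤ 1 := by
  unfold emb; split <;> norm_num

def clauseSum {ι : Type*} (q : Finset ι × Finset ι) (x : ι → ℝ) : ℝ :=
  ∑ i ∈ q.1, x i + ∑ j ∈ q.2, (1 - x j)

lemma clauseSum_nonneg {ι : Type*} (q : Finset ι × Finset ι) {x : ι → ℝ}
    (hx : ∀ i, 0 ≤ x i ∧ x i ≤ 1) : 0 ≤ clauseSum q x :=
  add_nonneg (Finset.sum_nonneg fun i _ => (hx i).1)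
    (Finset.sum_nonneg fun j _ => sub_nonneg.2 (hx j).2)

/-- At a 0/1 point the clause sum counts the satisfied literals. -/
lemma clauseSum_emb_eq_zero_or_one_le {ι : Type*} (q : Finset ι × Finset ι) (x : ι → Bool) :
    clauseSum q (emb x) = 0 ∨ 1 ≤ clauseSum q (emb x) := by
  obtain ⟨m, hm⟩ : ∃ m : ℕ, clauseSum q (emb x) = m :=
    ⟨(q.1.filter fun i => x i = true).card + (q.2.filter fun j => x j = false).card, by
      simp only [clauseSum, emb, Nat.cast_add, ← Finset.sum_boole]
      congr 1
      refine Finset.sum_congr rfl fun j _ => ?_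
      cases x j <;> norm_num⟩
  rw [hm]
  norm_cast
  omega

def restrictSet {ι : Type*} (K : Finset ι) (a : ι → Bool) (S : Set (ι → Bool)) : Set (K → Bool) :=
  { y | ∃ x ∈ S, (∀ i : K, x i = y i) ∧ ∀ i ∉ K, x i = a i }

section Restriction

variable {ι : Type*} [DecidableEq ι] (K : Finset ι) (a : ι → Bool)

def extendBy (y : K → ℝ) : ι → ℝ := fun i => if h : i ∈ K then y ⟨i, h⟩ else emb a i

variable {K a}

@[simp]
lemma extendBy_coe (y : K → ℝ) (i : K) : extendBy K a y i = y i := by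
  simp [extendBy]

lemma extendBy_of_notMem (y : K → ℝ) {i : ι} (hi : i ∉ K) : extendBy K a y i = emb a i := by
  simp [extendBy, hi]

lemma extendBy_add_smul {y y' : K → ℝ} {α β : ℝ} (hαβ : α + β = 1) :
    extendBy K a (α • y + β • y') = α • extendBy K a y + β • extendBy K a y' := by
  funext i
  by_cases hi : i ∈ K
  · simp [extendBy, hi]
  · simp only [extendBy, hi, dite_false, Pi.add_apply, Pi.smul_apply, smul_eq_mul]
    rw [← add_mul, hαβ, one_mul]

lemma extendBy_mem_box_iff {y : K → ℝ} :
    (∀ i, 0 ≤ extendBy K a y i ∧ extendBy K a y i ≤ 1) ↔ ∀ i, 0 ≤ y i ∧ y i ≤ 1 := by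
  refine ⟨fun h i => by simpa using h i, fun h i => ?_⟩
  by_cases hi : i ∈ K
  · simpa [extendBy, hi] using h ⟨i, hi⟩
  · rw [extendBy_of_notMem y hi]; exact emb_mem_Icc a i

lemma extendBy_emb {y : K → Bool} {x : ι → Bool}
    (hxy : ∀ i : K, x i = y i) (hxa : ∀ i ∉ K, x i = a i) :
    extendBy K a (emb y) = emb x := by
  funext i
  by_cases hi : i ∈ K
  · simp [extendBy, hi, emb, hxy ⟨i, hi⟩]
  · simp [extendBy, hi, emb, hxa i hi]

lemma extendBy_mem_convexHull {S : Set (ι → Bool)} {y : K → ℝ}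
    (hy : y ∈ convexHull ℝ (emb '' restrictSet K a S)) :
    extendBy K a y ∈ convexHull ℝ (emb '' S) := by
  refine convexHull_min ?_ ?_ hy (s := emb '' restrictSet K a S)
    (t := extendBy K a ⁻¹' convexHull ℝ (emb '' S))
  · rintro _ ⟨y, ⟨x, hxS, hxy, hxa⟩, rfl⟩
    rw [Set.mem_preimage, extendBy_emb hxy hxa]
    exact subset_convexHull ℝ _ ⟨x, hxS, rfl⟩
  · intro u hu v hv α β hα hβ hαβ
    rw [Set.mem_preimage, extendBy_add_smul hαβ]
    exact convex_convexHull ℝ _ hu hv hα hβ hαβ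

/-- On the cube, `x_i = a_i` is the equality case of the valid inequality `(2 a_i - 1) x_i ≤ a_i`,
so points of the face are convex combinations of points of `S` agreeing with `a` outside `K`. -/
lemma mem_convexHull_of_extendBy_mem {S : Set (ι → Bool)} {y : K → ℝ}
    (hy : extendBy K a y ∈ convexHull ℝ (emb '' S)) :
    y ∈ convexHull ℝ (emb '' restrictSet K a S) := by
  let l : {j // j ∉ K} → (ι → ℝ) →ₗ[ℝ] ℝ := fun j => (2 * emb a j - 1) • LinearMap.proj (j : ι)
  let c : {j // j ∉ K} → ℝ := fun j => emb a j
  have hface := mem_convexHull_setOf_eq_of_le l c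
    (by rintro _ ⟨x, -, rfl⟩ j; cases ha : a j <;> cases hx : x j <;> norm_num [l, c, emb, ha, hx])
    hy (fun j => by cases ha : a j <;> norm_num [l, c, emb, ha, extendBy_of_notMem y j.2])
  let π : (ι → ℝ) →ₗ[ℝ] (K → ℝ) := LinearMap.funLeft ℝ ℝ (↑)
  have hπ : π '' {z ∈ emb '' S | ∀ j, l j z = c j} ⊆ emb '' restrictSet K a S := by
    rintro _ ⟨_, ⟨⟨x, hxS, rfl⟩, hxa⟩, rfl⟩
    refine ⟨fun i => x i, ⟨x, hxS, fun i => rfl, fun j hj => ?_⟩, rfl⟩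
    have := hxa ⟨j, hj⟩
    cases ha : a j <;> cases hx : x j <;> simp_all [l, c, emb]
  have hπy : π (extendBy K a y) = y := funext fun i => extendBy_coe y i
  rw [← hπy]
  exact convexHull_mono hπ (π.image_convexHull _ ▸ Set.mem_image_of_mem π hface)

lemma mem_convexHull_restrictSet_iff {S : Set (ι → Bool)} {y : K → ℝ} :
    y ∈ convexHull ℝ (emb '' restrictSet K a S) ↔ extendBy K a y ∈ convexHull ℝ (emb '' S) :=
  ⟨extendBy_mem_convexHull, mem_convexHull_of_extendBy_mem⟩

variable (K) in
def restrictClause (q : Finset ι × Finset ι) : Finset K × Finset K :=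
  (q.1.subtype (· ∈ K), q.2.subtype (· ∈ K))

variable (K) in
def outsideClause (q : Finset ι × Finset ι) : Finset ι × Finset ι :=
  (q.1.filter (· ∉ K), q.2.filter (· ∉ K))

lemma sum_extendBy (s : Finset ι) (g : ℝ → ℝ) (y : K → ℝ) :
    ∑ i ∈ s, g (extendBy K a y i) =
      ∑ i ∈ s.subtype (· ∈ K), g (y i) + ∑ i ∈ s.filter (· ∉ K), g (emb a i) := by
  rw [← Finset.sum_filter_add_sum_filter_not s (· ∈ K), ← Finset.sum_subtype_eq_sum_filter]
  congr 1
  · simp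
  · exact Finset.sum_congr rfl fun i hi => by rw [extendBy_of_notMem y (Finset.mem_filter.1 hi).2]

lemma clauseSum_extendBy (q : Finset ι × Finset ι) (y : K → ℝ) :
    clauseSum q (extendBy K a y) =
      clauseSum (restrictClause K q) y + clauseSum (outsideClause K q) (emb a) := by
  simp only [clauseSum, restrictClause, outsideClause]
  have h1 := sum_extendBy (a := a) q.1 id y
  have h2 := sum_extendBy (a := a) q.2 (1 - ·) y
  simp only [id] at h1 h2
  rw [h1, h2]
  ring

lemma Disjoint.restrictClause {q : Finset ι × Finset ι} (hq : Disjoint q.1 q.2) :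
    Disjoint (restrictClause K q).1 (restrictClause K q).2 :=
  Finset.disjoint_left.2 fun _ h1 h2 =>
    Finset.disjoint_left.1 hq (Finset.mem_subtype.1 h1) (Finset.mem_subtype.1 h2)

variable (K a) in
/-- The system of the restriction: clauses satisfied by `a` outside `K` become redundant on the
face and are dropped, the others lose their literals outside `K`. -/
theorem CubeIdeal.restrictSet [Fintype ι] {S : Set (ι → Bool)} (hS : CubeIdeal S) :
    CubeIdeal (restrictSet K a S) := by
  obtain ⟨P, hPdisj, hP⟩ := hS
  refine ⟨restrictClause K '' {q ∈ P | clauseSum (outsideClause K q) (emb a) = 0}, ?_, ?_⟩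
  · rintro _ ⟨q, ⟨hq, -⟩, rfl⟩
    exact (hPdisj q hq).restrictClause
  ext y
  rw [mem_convexHull_restrictSet_iff, hP]
  simp only [Set.mem_ofPred_eq, extendBy_mem_box_iff, Set.forall_mem_image, and_imp]
  refine and_congr_right fun hy => forall₂_congr fun q _ => ?_
  change 1 ≤ clauseSum q _ ↔ _ → 1 ≤ clauseSum _ y
  rw [clauseSum_extendBy]
  rcases clauseSum_emb_eq_zero_or_one_le (outsideClause K q) a with h | h
  · simp [h]
  · have := clauseSum_nonneg (restrictClause K q) hy
    exact ⟨fun _ h0 => by linarith, fun _ => by linarith⟩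

end Restriction

/-- Restrictions of a cube-ideal set (fix the coordinates outside `K` to the
values of `a` and drop them) are cube-ideal. -/
theorem stmt_3 {n : ℕ} (S : Set (Fin n → Bool)) (hS : CubeIdeal S)
    (K : Finset (Fin n)) (a : Fin n → Bool) :
    CubeIdeal { y : {i // i ∈ K} → Bool |
      ∃ x ∈ S, (∀ i : {i // i ∈ K}, x i = y i) ∧ ∀ i ∉ K, x i = a i } :=
  hS.restrictSet K a
end

section
/- For S ⊆ {0,1}^n and p ∈ {0,1}^n, the induced clutter ind(S △ p), defined as the family of inclusionwise minimal sets in { C ⊆ [n] : χ_C ∈ S △ p }, is a contraction minor of the cuboid of S. Concretely, ind(S △ p) equals the minor of cuboid(S) obtained by contracting the set C(p) = { (i, p_i) : i ∈ [n] } (i.e., cuboid(S) / C(p), after identifying the remaining ground set { (i, 1 − p_i) : i ∈ [n] } with [n]). -/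
/-- The member `C(p) = {(i, p i) : i ∈ [n]}` of a cuboid. -/
def cubMem {n : ℕ} (p : Fin n → Bool) : Finset (Fin n × Bool) :=
  Finset.univ.image fun i => (i, p i)

/-- The cuboid of `S ⊆ {0,1}^n`. -/
def cuboid {n : ℕ} (S : Set (Fin n → Bool)) : Set (Finset (Fin n × Bool)) :=
  cubMem '' S

/-- The contraction minor `𝒞 / J`: the inclusionwise minimal sets of
`{ C \ J : C ∈ 𝒞 }`. -/
def contractMinor {V : Type*} [DecidableEq V] (𝒞 : Set (Finset V)) (J : Finset V) :
    Set (Finset V) :=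
  { A | A ∈ {B | ∃ C ∈ 𝒞, C \ J = B} ∧
        ∀ B ∈ {B | ∃ C ∈ 𝒞, C \ J = B}, B ⊆ A → B = A }

/-- The induced clutter of `S` with respect to `p`: the inclusionwise minimal
sets among `{C ⊆ [n] : χ_C ∈ S △ p}`. -/
def inducedClutter {n : ℕ} (S : Set (Fin n → Bool)) (p : Fin n → Bool) :
    Set (Finset (Fin n)) :=
  { A | A ∈ {C : Finset (Fin n) | (fun i => decide (i ∈ C)) ∈
          (fun x => fun i => xor (x i) (p i)) '' S} ∧
        ∀ B ∈ {C : Finset (Fin n) | (fun i => decide (i ∈ C)) ∈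
          (fun x => fun i => xor (x i) (p i)) '' S}, B ⊆ A → B = A }

lemma phi_subset_iff {n : ℕ} (p : Fin n → Bool) (A B : Finset (Fin n)) :
    (A.image fun i => (i, ! p i)) ⊆ (B.image fun i => (i, ! p i)) ↔ A ⊆ B := by
  constructor
  · intro h i hi
    have h2 : (i, ! p i) ∈ B.image fun i => (i, ! p i) := h (Finset.mem_image_of_mem _ hi)
    obtain ⟨j, hj, hji⟩ := Finset.mem_image.mp h2
    have : j = i := congrArg Prod.fst hji
    exact this ▸ hj
  · exact Finset.image_subset_image

lemma phi_inj {n : ℕ} (p : Fin n → Bool) {A B : Finset (Fin n)}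
    (h : (A.image fun i => (i, ! p i)) = (B.image fun i => (i, ! p i))) : A = B :=
  Finset.Subset.antisymm ((phi_subset_iff p A B).mp h.le) ((phi_subset_iff p B A).mp h.ge)

lemma cub_sdiff {n : ℕ} (p x : Fin n → Bool) :
    cubMem x \ cubMem p
      = (Finset.univ.filter fun i => x i ≠ p i).image fun i => (i, ! p i) := by
  ext ⟨i, b⟩
  simp only [cubMem, Finset.mem_sdiff, Finset.mem_image, Finset.mem_filter,
    Finset.mem_univ, true_and, Prod.mk.injEq]
  constructor
  · rintro ⟨⟨j, rfl, rfl⟩, h2⟩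
    exact ⟨j, fun h => h2 ⟨j, rfl, h.symm⟩, rfl,
      by cases hx : x j <;> cases hp : p j <;> simp_all⟩
  · rintro ⟨j, hne, rfl, rfl⟩
    refine ⟨⟨j, rfl, by cases hx : x j <;> cases hp : p j <;> simp_all⟩, ?_⟩
    rintro ⟨k, rfl, hk⟩
    simp at hk

lemma setEq {n : ℕ} (S : Set (Fin n → Bool)) (p : Fin n → Bool) :
    {B | ∃ C ∈ cuboid S, C \ cubMem p = B}
      = (fun A : Finset (Fin n) => A.image fun i => (i, ! p i)) ''
        {C : Finset (Fin n) | (fun i => decide (i ∈ C)) ∈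
          (fun x => fun i => xor (x i) (p i)) '' S} := by
  ext B
  constructor
  · rintro ⟨C, ⟨x, hx, rfl⟩, rfl⟩
    refine ⟨Finset.univ.filter fun i => x i ≠ p i, ⟨x, hx, ?_⟩, (cub_sdiff p x).symm⟩
    funext i
    simp only [Finset.mem_filter, Finset.mem_univ, true_and]
    cases x i <;> cases p i <;> simp
  · rintro ⟨A, ⟨x, hx, hA⟩, rfl⟩
    refine ⟨cubMem x, ⟨x, hx, rfl⟩, ?_⟩
    rw [cub_sdiff]
    congr 1
    ext i
    have h : xor (x i) (p i) = decide (i ∈ A) := congrFun hA i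
    simp only [Finset.mem_filter, Finset.mem_univ, true_and]
    constructor
    · intro hne
      have hx1 : xor (x i) (p i) = true := by
        cases hx' : x i <;> cases hp' : p i <;> simp_all
      exact of_decide_eq_true (h.symm.trans hx1)
    · intro hi he
      rw [he, Bool.xor_self] at h
      simp [hi] at h

/-- `ind(S △ p)` is the contraction minor `cuboid(S) / C(p)`, once the remaining
ground set `{(i, ¬ p i) : i ∈ [n]}` is identified with `[n]` via `i ↦ (i, ¬ p i)`. -/
theorem stmt_12 {n : ℕ} (S : Set (Fin n → Bool)) (p : Fin n → Bool) :
    (fun A : Finset (Fin n) => A.image fun i => (i, ! p i)) '' inducedClutter S p =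
      contractMinor (cuboid S) (cubMem p) := by
  ext B
  rw [contractMinor]
  simp only [Set.mem_setOf_eq, setEq S p]
  constructor
  · rintro ⟨A, ⟨hA, hmin⟩, rfl⟩
    refine ⟨⟨A, hA, rfl⟩, ?_⟩
    rintro B' ⟨A', hA', rfl⟩ hsub
    exact congrArg _ (hmin A' hA' ((phi_subset_iff p A' A).mp hsub))
  · rintro ⟨⟨A, hA, rfl⟩, hmin⟩
    refine ⟨A, ⟨hA, ?_⟩, rfl⟩
    intro A' hA' hsub
    exact phi_inj p (hmin _ ⟨A', hA', rfl⟩ ((phi_subset_iff p A' A).mpr hsub))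
end
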